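/- Let M be a finite MDP with defender state-observation function DObs_S, user objective φ0 = ¬U0 𝖴 F0 and attacker objective φ1 = ¬U1 𝖴 F1, and let M~ and M^ be respectively the action-visible and action-invisible augmented MDPs built from these data. If the initial augmented state (s0, DObs_S(s0)) belongs to the almost-sure winning region of M~ for ¬U~1 𝖴 F~1, then (s0, DObs_S(s0)) belongs to the almost-sure winning region of M^ for ¬U^1 𝖴 F^1. In other words, if the attacker has a non-revealing intention-deception almost-sure winning strategy against the action-visible defender, he has one against the action-invisible defender. -/

import Mathlib

open scoped BigOperators Classical

/-- A finite Markov decision process: finite state set `S`, finite action set `A`,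
nonempty enabled-action sets, an initial state, and a transition kernel that is a
probability distribution on `S` for every state and enabled action. -/
structure MDP (S A : Type) [Fintype S] [Fintype A] where
  act : S → Finset A
  act_nonempty : ∀ s, (act s).Nonempty
  init : S
  P : S → A → S → ℝ
  P_nonneg : ∀ s a s', 0 ≤ P s a s'
  P_sum_one : ∀ s, ∀ a ∈ act s, (∑ s', P s a s') = 1

variable {S A : Type} [Fintype S] [Fintype A]

/-- `Post(s,a)`: states reachable with positive probability. -/
def post (M : MDP S A) (s : S) (a : A) : Set S := {s' | 0 < M.P s a s'}

/-- The last state of a history `(s, l)` (state `s` followed by action-state steps `l`). -/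
def lastState (s : S) (l : List (A × S)) : S :=
  (l.getLast?.map Prod.snd).getD s

/-- `(s, l)` is a (valid) history of `M`: each action is enabled and each transition
has positive probability. -/
def isHist (M : MDP S A) : S → List (A × S) → Prop
  | _, [] => True
  | s, (a, s') :: rest => a ∈ M.act s ∧ 0 < M.P s a s' ∧ isHist M s' rest

/-- The `i`-th state of the history `(s, l)`. -/
def stateAt (s : S) (l : List (A × S)) : ℕ → S
  | 0 => s
  | i + 1 => ((l[i]?).map Prod.snd).getD s

/-- `Occ(h)`: the set of states occurring in the history `(s, l)`. -/
def occ (s : S) (l : List (A × S)) : Set S :=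
  insert s {t | t ∈ l.map Prod.snd}

/-- The history `(s, l)` satisfies the reach-avoid objective `¬U 𝖴 F`. -/
def satRA (U F : Set S) (s : S) (l : List (A × S)) : Prop :=
  ∃ k ≤ l.length, stateAt s l k ∈ F ∧ ∀ i < k, stateAt s l i ∉ U ∪ F

/-- Probability of the continuation `l` of the history `(s0, pre)` under strategy `π`. -/
noncomputable def prFrom (M : MDP S A) (π : S → List (A × S) → A → ℝ) :
    S → List (A × S) → List (A × S) → ℝ
  | _, _, [] => 1
  | s0, pre, (a, s') :: rest =>
      π s0 pre a * M.P (lastState s0 pre) a s' * prFrom M π s0 (pre ++ [(a, s')]) rest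

/-- `Pr(h; M_π)`: the probability of the history `h = (s, l)` under strategy `π`. -/
noncomputable def prHist (M : MDP S A) (π : S → List (A × S) → A → ℝ)
    (s : S) (l : List (A × S)) : ℝ :=
  prFrom M π s [] l

/-- A (randomized, history-dependent) strategy: maps each history to a probability
distribution over the actions enabled at its last state. -/
structure Strategy (M : MDP S A) where
  toFun : S → List (A × S) → A → ℝ
  nonneg : ∀ s l a, 0 ≤ toFun s l a
  sum_one : ∀ s l, (∑ a, toFun s l a) = 1
  support_mem : ∀ s l a, 0 < toFun s l a → a ∈ M.act (lastState s l)

/-- A (randomized) Markov strategy: maps each state to a probability distribution over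
the actions enabled at that state. -/
structure MarkovStrategy (M : MDP S A) where
  toFun : S → A → ℝ
  nonneg : ∀ s a, 0 ≤ toFun s a
  sum_one : ∀ s, (∑ a, toFun s a) = 1
  support_mem : ∀ s a, 0 < toFun s a → a ∈ M.act s

/-- The history-dependent strategy induced by a Markov strategy. -/
def MarkovStrategy.strat {M : MDP S A} (σ : MarkovStrategy M) : Strategy M where
  toFun s l a := σ.toFun (lastState s l) a
  nonneg s l a := σ.nonneg _ a
  sum_one s l := σ.sum_one _
  support_mem s l a h := σ.support_mem _ a h

/-- Sum of `Pr(h; M_π)` over all histories `h` of length `n` starting at `s` that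
satisfy the reach-avoid objective `¬U 𝖴 F`. -/
noncomputable def satProbN (M : MDP S A) (π : S → List (A × S) → A → ℝ)
    (U F : Set S) (s : S) (n : ℕ) : ℝ :=
  ∑ f : Fin n → A × S,
    if isHist M s (List.ofFn f) ∧ satRA U F s (List.ofFn f)
    then prHist M π s (List.ofFn f) else 0

/-- `Pr_s(¬U 𝖴 F; M_π)`: supremum over `n` of `satProbN`. -/
noncomputable def prSat (M : MDP S A) (π : S → List (A × S) → A → ℝ)
    (U F : Set S) (s : S) : ℝ :=
  ⨆ n : ℕ, satProbN M π U F s n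

/-- The almost-sure winning region `ASW(¬U 𝖴 F)`. -/
def ASW (M : MDP S A) (U F : Set S) : Set S :=
  {s | ∃ π : Strategy M, prSat M π.toFun U F s = 1}

/-- `Allowed(s)`: enabled actions keeping the agent inside `ASW(¬U 𝖴 F)`
(empty for `s ∉ ASW(¬U 𝖴 F)`). -/
def allowed (M : MDP S A) (U F : Set S) (s : S) : Set A :=
  {a | s ∈ ASW M U F ∧ a ∈ M.act s ∧ post M s a ⊆ ASW M U F}

/-- A defender state-observation function: observation-equivalence classes partition the
state space and observation-equivalent states have the same enabled actions. -/
structure ObsFun (M : MDP S A) where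
  obs : S → Set S
  mem_self : ∀ s, s ∈ obs s
  eq_of_mem : ∀ s s', s' ∈ obs s → obs s' = obs s
  act_eq : ∀ s s', s' ∈ obs s → M.act s' = M.act s

/-- Action-visible belief update `Update_v(B, a, s'')`. -/
def updateV (M : MDP S A) (O : ObsFun M) (U0 F0 : Set S)
    (B : Set S) (a : A) (s'' : S) : Set S :=
  {s' | ∃ so ∈ B, a ∈ allowed M U0 F0 so ∧ s' ∈ post M so a ∧ O.obs s' = O.obs s''}

/-- Action-invisible belief update `Update_inv(B, s'')`. -/
def updateInv (M : MDP S A) (O : ObsFun M) (U0 F0 : Set S)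
    (B : Set S) (s'' : S) : Set S :=
  {s' | ∃ so ∈ B, ∃ ao ∈ allowed M U0 F0 so, s' ∈ post M so ao ∧ O.obs s' = O.obs s''}

/-- The unsafe set `U~1 = {(s,B) : s ∈ U1, B ≠ ∅} ∪ {(s,∅) : s ∈ S}` of the
augmented MDP. -/
def augU (U1 : Set S) : Set (S × Set S) :=
  {p | (p.1 ∈ U1 ∧ p.2 ≠ ∅) ∨ p.2 = ∅}

/-- The target set `F~1 = F1 × (2^S \ {∅})` of the augmented MDP. -/
def augF (F1 : Set S) : Set (S × Set S) :=
  {p | p.1 ∈ F1 ∧ p.2 ≠ ∅}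

/-- The action-visible augmented MDP `M~`. -/
noncomputable def augV (M : MDP S A) (O : ObsFun M) (U0 F0 : Set S) :
    MDP (S × Set S) A where
  act p := M.act p.1
  act_nonempty p := M.act_nonempty p.1
  init := (M.init, O.obs M.init)
  P p a q :=
    if p.2.Nonempty ∧ ∃ so ∈ p.2, a ∈ allowed M U0 F0 so then
      (if q.2 = updateV M O U0 F0 p.2 a q.1 then M.P p.1 a q.1 else 0)
    else (if q = (p.1, (∅ : Set S)) then 1 else 0)
  P_nonneg := by
    intro p a q
    try dsimp only
    split_ifs <;> first | exact M.P_nonneg _ _ _ | norm_num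
  P_sum_one := by
    intro p a ha
    by_cases hc : p.2.Nonempty ∧ ∃ so ∈ p.2, a ∈ allowed M U0 F0 so
    · simp only [if_pos hc]
      rw [Fintype.sum_prod_type]
      have : ∀ t : S,
          (∑ C : Set S, if C = updateV M O U0 F0 p.2 a t then M.P p.1 a t else 0)
            = M.P p.1 a t := by
        intro t
        simp [Finset.sum_ite_eq']
      simp only [this]
      exact M.P_sum_one p.1 a ha
    · simp only [if_neg hc]
      simp [Finset.sum_ite_eq']

/-- The action-invisible augmented MDP `M^`. -/
noncomputable def augInv (M : MDP S A) (O : ObsFun M) (U0 F0 : Set S) :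
    MDP (S × Set S) A where
  act p := M.act p.1
  act_nonempty p := M.act_nonempty p.1
  init := (M.init, O.obs M.init)
  P p a q :=
    if (∃ so ∈ p.2, a ∈ allowed M U0 F0 so) ∧ a ∈ M.act p.1 then
      (if q.2 = updateInv M O U0 F0 p.2 q.1 then M.P p.1 a q.1 else 0)
    else (if q = (p.1, (∅ : Set S)) then 1 else 0)
  P_nonneg := by
    intro p a q
    try dsimp only
    split_ifs <;> first | exact M.P_nonneg _ _ _ | norm_num
  P_sum_one := by
    intro p a ha
    by_cases hc : (∃ so ∈ p.2, a ∈ allowed M U0 F0 so) ∧ a ∈ M.act p.1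
    · simp only [if_pos hc]
      rw [Fintype.sum_prod_type]
      have : ∀ t : S,
          (∑ C : Set S, if C = updateInv M O U0 F0 p.2 t then M.P p.1 a t else 0)
            = M.P p.1 a t := by
        intro t
        simp [Finset.sum_ite_eq']
      simp only [this]
      exact M.P_sum_one p.1 a ha
    · simp only [if_neg hc]
      simp [Finset.sum_ite_eq']

/-- The defender's belief after observing (states and actions of) the history `(s0, l)`,
for an action-visible defender: `B0 = DObs_S(s0)`, `B(i+1) = Update_v(Bi, ai, s(i+1))`. -/
def beliefV (M : MDP S A) (O : ObsFun M) (U0 F0 : Set S)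
    (s0 : S) (l : List (A × S)) : Set S :=
  l.foldl (fun B p => updateV M O U0 F0 B p.1 p.2) (O.obs s0)

/-- The defender's belief after observing (the states of) the history `(s0, l)`,
for an action-invisible defender: `B0 = DObs_S(s0)`, `B(i+1) = Update_inv(Bi, s(i+1))`. -/
def beliefInv (M : MDP S A) (O : ObsFun M) (U0 F0 : Set S)
    (s0 : S) (l : List (A × S)) : Set S :=
  l.foldl (fun B p => updateInv M O U0 F0 B p.2) (O.obs s0)

/-- The finite-memory strategy on `M` induced by a Markov strategy of the action-visible
augmented MDP `M~`. -/
noncomputable def inducedV (M : MDP S A) (O : ObsFun M) (U0 F0 : Set S)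
    (σ : MarkovStrategy (augV M O U0 F0)) : Strategy M where
  toFun s l a := σ.toFun (lastState s l, beliefV M O U0 F0 s l) a
  nonneg s l a := σ.nonneg _ a
  sum_one s l := σ.sum_one _
  support_mem s l a h := σ.support_mem _ a h

/-- The finite-memory strategy on `M` induced by a Markov strategy of the
action-invisible augmented MDP `M^`. -/
noncomputable def inducedInv (M : MDP S A) (O : ObsFun M) (U0 F0 : Set S)
    (σ : MarkovStrategy (augInv M O U0 F0)) : Strategy M where
  toFun s l a := σ.toFun (lastState s l, beliefInv M O U0 F0 s l) a
  nonneg s l a := σ.nonneg _ a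
  sum_one s l := σ.sum_one _
  support_mem s l a h := σ.support_mem _ a h

/-- A ranking witness `(W, r)` for the reach-avoid objective `¬U 𝖴 F`. -/
def rankWitness (M : MDP S A) (U F : Set S) (W : Set S) (r : S → ℕ) : Prop :=
  W ∩ U = ∅ ∧
  ∀ s ∈ W \ F, ∃ a ∈ M.act s, post M s a ⊆ W ∧
    (post M s a ∩ {t ∈ W | r t < r s}).Nonempty

/-!
Against the action-invisible defender the attacker simulates an almost-sure winning strategy `π`
of `M~`: from the observed states and his own actions he recomputes the belief that an
action-visible defender would hold, and plays what `π` plays there. Since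
`Update_v(B, a, s) ⊆ Update_inv(C, s)` whenever `B ⊆ C`, the invisible belief always contains the
visible one, so every move that keeps the belief of `M~` nonempty is also available in `M^`,
with the same probability. Hence a history of `M~` that first meets `¬U~1 𝖴 F~1` at step `k`
(and so has nonempty beliefs up to `k`) corresponds injectively to a history of `M^` of the same
probability that first meets `¬U^1 𝖴 F^1` at step `k`. The comparison has to be made for each
such `k` separately: after that step the belief of `M~` may become empty, and the two augmented
MDPs no longer move in step.
-/

section Histories

variable {α X Y : Type}

theorem lastState_append_singleton (x : X) (l : List (α × X)) (a : α) (y : X) :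
    lastState x (l ++ [(a, y)]) = y := by
  simp [lastState]

theorem stateAt_append {x : X} {l : List (α × X)} (l' : List (α × X)) {i : ℕ}
    (hi : i ≤ l.length) : stateAt x (l ++ l') i = stateAt x l i := by
  cases i with
  | zero => rfl
  | succ j => simp only [stateAt, List.getElem?_append_left (by omega : j < l.length)]

theorem stateAt_succ_of_lt (x : X) {l : List (α × X)} {i : ℕ} (hi : i < l.length) :
    stateAt x l (i + 1) = l[i].2 := by
  simp [stateAt, List.getElem?_eq_getElem hi]

theorem stateAt_rel {R : X → Y → Prop} {x : X} {y : Y} {l : List (α × X)}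
    {l' : List (α × Y)} (hxy : R x y) (hl : List.Forall₂ R (l.map Prod.snd) (l'.map Prod.snd)) :
    ∀ i, R (stateAt x l i) (stateAt y l' i)
  | 0 => hxy
  | i + 1 => by
    simp only [stateAt, ← List.getElem?_map]
    generalize l.map Prod.snd = m, l'.map Prod.snd = m' at hl
    induction hl generalizing i with
    | nil => simpa using hxy
    | cons hr _ ih => cases i <;> simp [hr, ih]

end Histories

section ExactSatisfaction

variable {α X Y : Type}

def satAt (U F : Set X) (x : X) (l : List (α × X)) (k : ℕ) : Prop :=
  stateAt x l k ∈ F ∧ ∀ i < k, stateAt x l i ∉ U ∪ F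

theorem satAt_unique {U F : Set X} {x : X} {l : List (α × X)} {k k' : ℕ}
    (h : satAt U F x l k) (h' : satAt U F x l k') : k = k' := by
  by_contra hne
  rcases Nat.lt_or_gt_of_ne hne with hlt | hlt
  · exact h'.2 k hlt (Or.inr h.1)
  · exact h.2 k' hlt (Or.inr h'.1)

theorem ite_satRA_eq_sum (U F : Set X) (x : X) (l : List (α × X)) (r : ℝ) :
    (if satRA U F x l then r else 0)
      = ∑ k ∈ Finset.range (l.length + 1), if satAt U F x l k then r else 0 := by
  by_cases h : satRA U F x l
  · obtain ⟨k, hk, hF, hUF⟩ := h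
    have hsat : satAt U F x l k := ⟨hF, hUF⟩
    rw [if_pos ⟨k, hk, hsat⟩, Finset.sum_eq_single_of_mem k (by simpa [Nat.lt_succ_iff]),
      if_pos hsat]
    exact fun j _ hjk => if_neg fun hj => hjk (satAt_unique hj hsat)
  · rw [if_neg h]
    refine (Finset.sum_eq_zero fun k hk => if_neg fun hsat => h ⟨k, ?_, hsat⟩).symm
    simpa [Nat.lt_succ_iff] using hk

theorem satAt_append_iff {U F : Set X} {x : X} {l : List (α × X)} (l' : List (α × X))
    {k : ℕ} (hk : k ≤ l.length) : satAt U F x (l ++ l') k ↔ satAt U F x l k := by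
  refine and_congr (by rw [stateAt_append l' hk]) (forall₂_congr fun i hi => ?_)
  rw [stateAt_append l' (by omega)]

theorem satAt.of_rel {R : X → Y → Prop} {U F : Set X} {U' F' : Set Y} {x : X} {y : Y}
    {l : List (α × X)} {l' : List (α × Y)} {k : ℕ}
    (hF : ∀ p q, R p q → p ∈ F → q ∈ F') (hUF : ∀ p q, R p q → q ∈ U' ∪ F' → p ∈ U ∪ F)
    (hR : ∀ i, R (stateAt x l i) (stateAt y l' i)) (h : satAt U F x l k) :
    satAt U' F' y l' k :=
  ⟨hF _ _ (hR k) h.1, fun i hi hmem => h.2 i hi (hUF _ _ (hR i) hmem)⟩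

theorem satAt.snd_notMem_sdiff {U F : Set X} {x : X} {l : List (α × X)}
    (h : satAt U F x l l.length) : ∀ p ∈ l, p.2 ∉ U \ F := by
  intro p hp hpUF
  obtain ⟨i, hi, rfl⟩ := List.getElem_of_mem hp
  have hstate := stateAt_succ_of_lt x hi
  rcases (Nat.succ_le_of_lt hi).lt_or_eq with hlt | heq
  · exact h.2 _ hlt (hstate ▸ Or.inl hpUF.1)
  · have hF := h.1
    rw [← heq, Nat.succ_eq_add_one, hstate] at hF
    exact hpUF.2 hF

theorem satAt_augU_augF_of_forall₂ {U1 F1 : Set X} {p : X × Set X}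
    {l l' : List (α × (X × Set X))} {k : ℕ}
    (hl : List.Forall₂ (fun q q' => q'.1 = q.1 ∧ q.2 ⊆ q'.2) (l.map Prod.snd) (l'.map Prod.snd))
    (h : satAt (augU U1) (augF F1) p l k) : satAt (augU U1) (augF F1) p l' k := by
  refine h.of_rel (fun q q' ⟨h1, h2⟩ hq => ?_) (fun q q' ⟨h1, h2⟩ hq' => ?_)
    (stateAt_rel ⟨rfl, subset_rfl⟩ hl)
  · exact ⟨h1 ▸ hq.1, fun h => hq.2 (Set.subset_empty_iff.mp (h ▸ h2))⟩
  · by_cases hq0 : q.2 = ∅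
    · exact .inl (.inr hq0)
    have hq'0 : q'.2 ≠ ∅ := fun h => hq0 (Set.subset_empty_iff.mp (h ▸ h2))
    simp only [augU, augF, Set.mem_union, Set.mem_ofPred_eq, h1] at hq' ⊢
    tauto

end ExactSatisfaction

section Beliefs

variable {α X β γ : Type}

def runBelief (u : β → α → X → β) (b : β) (w : List (α × X)) : β :=
  w.foldl (fun b p => u b p.1 p.2) b

def liftBelief (u : β → α → X → β) : β → List (α × X) → List (α × (X × β))
  | _, [] => []
  | b, (a, x) :: w => (a, (x, u b a x)) :: liftBelief u (u b a x) w

def stripBelief (l : List (α × (X × β))) : List (α × X) :=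
  l.map fun p => (p.1, p.2.1)

@[simp]
theorem length_liftBelief (u : β → α → X → β) (b : β) (w : List (α × X)) :
    (liftBelief u b w).length = w.length := by
  induction w generalizing b with
  | nil => rfl
  | cons p w ih => simp [liftBelief, ih]

@[simp]
theorem length_stripBelief (l : List (α × (X × β))) : (stripBelief l).length = l.length :=
  List.length_map _

@[simp]
theorem stripBelief_liftBelief (u : β → α → X → β) (b : β) (w : List (α × X)) :
    stripBelief (liftBelief u b w) = w := by
  induction w generalizing b with
  | nil => rfl
  | cons p w ih => simpa [liftBelief, stripBelief] using ih _

theorem lastState_stripBelief (x : X × β) (l : List (α × (X × β))) :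
    lastState x.1 (stripBelief l) = (lastState x l).1 := by
  cases h : l.getLast? <;> simp [lastState, stripBelief, h]

theorem liftBelief_append_singleton (u : β → α → X → β) (b : β) (w : List (α × X)) (a : α)
    (x : X) :
    liftBelief u b (w ++ [(a, x)])
      = liftBelief u b w ++ [(a, (x, u (runBelief u b w) a x))] := by
  induction w generalizing b with
  | nil => rfl
  | cons p w ih => simp [liftBelief, runBelief, ih]

theorem lastState_liftBelief (u : β → α → X → β) (x : X) (b : β) (w : List (α × X)) :
    lastState (x, b) (liftBelief u b w) = (lastState x w, runBelief u b w) := by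
  induction w using List.reverseRecOn with
  | nil => rfl
  | append_singleton w p _ =>
    obtain ⟨a, y⟩ := p
    simp [liftBelief_append_singleton, lastState_append_singleton, runBelief]

variable {r : β → γ → Prop} {u : β → α → X → β} {u' : γ → α → X → γ}

theorem runBelief_rel (hu : ∀ b c a x, r b c → r (u b a x) (u' c a x)) {b : β} {c : γ}
    (hbc : r b c) (w : List (α × X)) : r (runBelief u b w) (runBelief u' c w) := by
  induction w generalizing b c with
  | nil => exact hbc
  | cons p w ih => exact ih (hu _ _ _ _ hbc)

theorem forall₂_liftBelief (hu : ∀ b c a x, r b c → r (u b a x) (u' c a x)) {b : β} {c : γ}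
    (hbc : r b c) (w : List (α × X)) :
    List.Forall₂ (fun p q => q.1 = p.1 ∧ r p.2 q.2)
      ((liftBelief u b w).map Prod.snd) ((liftBelief u' c w).map Prod.snd) := by
  induction w generalizing b c with
  | nil => exact .nil
  | cons p w ih => exact .cons ⟨rfl, hu _ _ _ _ hbc⟩ (ih (hu _ _ _ _ hbc))

end Beliefs

theorem sum_ofFn_succ {γ R : Type} [Fintype γ] [AddCommMonoid R] (n : ℕ) (f : List γ → R) :
    ∑ g : Fin (n + 1) → γ, f (List.ofFn g)
      = ∑ g : Fin n → γ, ∑ x : γ, f (List.ofFn g ++ [x]) := by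
  rw [← (Fin.snocEquiv fun _ => γ).sum_comp, Fintype.sum_prod_type, Finset.sum_comm]
  simp [Fin.snocEquiv, List.ofFn_succ_last, -List.ofFn_succ]

theorem sum_ofFn_le_sum_ofFn_of_injOn {γ δ : Type} [Fintype γ] [Fintype δ] {k : ℕ}
    {f : List γ → ℝ} {g : List δ → ℝ} (F : List γ → List δ)
    (hlen : ∀ l, (F l).length = l.length)
    (hinj : ∀ l₁ l₂, f l₁ ≠ 0 → f l₂ ≠ 0 → F l₁ = F l₂ → l₁ = l₂)
    (hval : ∀ l, l.length = k → f l ≠ 0 → g (F l) = f l) (hg : ∀ l, 0 ≤ g l) :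
    ∑ x : Fin k → γ, f (List.ofFn x) ≤ ∑ y : Fin k → δ, g (List.ofFn y) := by
  set Φ : (Fin k → γ) → Fin k → δ := fun x i => (F (List.ofFn x))[i.1]'(by simp [hlen])
  have hΦ : ∀ x, List.ofFn (Φ x) = F (List.ofFn x) := fun x =>
    List.ext_getElem (by simp [hlen]) fun _ _ _ => List.getElem_ofFn ..
  set D := Finset.univ.filter fun x : Fin k → γ => f (List.ofFn x) ≠ 0
  have hD : ∀ x ∈ D, f (List.ofFn x) ≠ 0 := fun x hx => (Finset.mem_filter.mp hx).2
  calc ∑ x, f (List.ofFn x) = ∑ x ∈ D, f (List.ofFn x) := (Finset.sum_filter_ne_zero _).symm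
    _ = ∑ x ∈ D, g (List.ofFn (Φ x)) :=
        Finset.sum_congr rfl fun x hx => by rw [hΦ, hval _ (by simp) (hD x hx)]
    _ = ∑ y ∈ D.image Φ, g (List.ofFn y) := by
        refine (Finset.sum_image (f := fun y => g (List.ofFn y))
          fun x hx y hy hxy => List.ofFn_injective ?_).symm
        exact hinj _ _ (hD x hx) (hD y hy) (by rw [← hΦ, ← hΦ, hxy])
    _ ≤ ∑ y, g (List.ofFn y) :=
        Finset.sum_le_sum_of_subset_of_nonneg (Finset.subset_univ _) fun y _ _ => hg _

section Probability

variable (M : MDP S A)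

theorem prFrom_nonneg (π : Strategy M) (s : S) (pre l : List (A × S)) :
    0 ≤ prFrom M π.toFun s pre l := by
  induction l generalizing pre with
  | nil => exact zero_le_one
  | cons p l ih => exact mul_nonneg (mul_nonneg (π.nonneg ..) (M.P_nonneg ..)) (ih _)

theorem prHist_nonneg (π : Strategy M) (s : S) (l : List (A × S)) :
    0 ≤ prHist M π.toFun s l :=
  prFrom_nonneg M π s [] l

theorem prFrom_append_singleton (π : S → List (A × S) → A → ℝ) (s : S) (pre l : List (A × S))
    (a : A) (t : S) :
    prFrom M π s pre (l ++ [(a, t)])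
      = prFrom M π s pre l * (π s (pre ++ l) a * M.P (lastState s (pre ++ l)) a t) := by
  induction l generalizing pre with
  | nil => simp [prFrom]
  | cons p l ih => simp [prFrom, ih, mul_assoc]

theorem prHist_append_singleton (π : S → List (A × S) → A → ℝ) (s : S) (l : List (A × S))
    (a : A) (t : S) :
    prHist M π s (l ++ [(a, t)]) = prHist M π s l * (π s l a * M.P (lastState s l) a t) := by
  simpa [prHist] using prFrom_append_singleton M π s [] l a t

theorem isHist_of_prFrom_ne_zero (π : Strategy M) (s : S) (pre l : List (A × S))
    (h : prFrom M π.toFun s pre l ≠ 0) : isHist M (lastState s pre) l := by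
  induction l generalizing pre with
  | nil => trivial
  | cons p l ih =>
    obtain ⟨a, t⟩ := p
    simp only [prFrom, ne_eq, mul_eq_zero, not_or] at h
    obtain ⟨⟨hπ, hP⟩, hrest⟩ := h
    refine ⟨π.support_mem _ _ _ ((π.nonneg ..).lt_of_ne' hπ), (M.P_nonneg ..).lt_of_ne' hP, ?_⟩
    simpa [lastState_append_singleton] using ih _ hrest

theorem isHist_of_prHist_ne_zero (π : Strategy M) {s : S} {l : List (A × S)}
    (h : prHist M π.toFun s l ≠ 0) : isHist M s l :=
  isHist_of_prFrom_ne_zero M π s [] l h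

theorem sum_prHist_append_singleton (π : Strategy M) (s : S) (l : List (A × S)) :
    ∑ x : A × S, prHist M π.toFun s (l ++ [x]) = prHist M π.toFun s l := by
  have hstep : ∀ a, ∑ t, π.toFun s l a * M.P (lastState s l) a t = π.toFun s l a := by
    intro a
    rw [← Finset.mul_sum]
    rcases (π.nonneg s l a).eq_or_lt with h | h
    · rw [← h, zero_mul]
    · rw [M.P_sum_one _ a (π.support_mem s l a h), mul_one]
  simp only [Fintype.sum_prod_type, prHist_append_singleton, ← Finset.mul_sum, hstep,
    π.sum_one, mul_one]

theorem sum_ite_prHist_eq_of_le (π : Strategy M) (s : S) {c : List (A × S) → Prop}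
    [DecidablePred c] {k m : ℕ} (hc : ∀ l x, k ≤ l.length → (c (l ++ [x]) ↔ c l)) (hkm : k ≤ m) :
    ∑ g : Fin m → A × S, (if c (List.ofFn g) then prHist M π.toFun s (List.ofFn g) else 0)
      = ∑ g : Fin k → A × S, if c (List.ofFn g) then prHist M π.toFun s (List.ofFn g) else 0 := by
  induction m, hkm using Nat.le_induction with
  | base => rfl
  | succ m hkm ih =>
    rw [sum_ofFn_succ m fun l => if c l then prHist M π.toFun s l else 0, ← ih]
    refine Finset.sum_congr rfl fun g _ => ?_
    have hext : ∀ x, c (List.ofFn g ++ [x]) ↔ c (List.ofFn g) :=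
      fun x => hc _ x (by simpa using hkm)
    simp_rw [hext]
    split_ifs <;> simp [sum_prHist_append_singleton]

noncomputable def prSatAt (π : S → List (A × S) → A → ℝ) (U F : Set S) (s : S) (k : ℕ) : ℝ :=
  ∑ g : Fin k → A × S, if satAt U F s (List.ofFn g) k then prHist M π s (List.ofFn g) else 0

theorem satProbN_le_one (π : Strategy M) (U F : Set S) (s : S) (n : ℕ) :
    satProbN M π.toFun U F s n ≤ 1 :=
  calc satProbN M π.toFun U F s n
      ≤ ∑ g : Fin n → A × S, if True then prHist M π.toFun s (List.ofFn g) else 0 :=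
        Finset.sum_le_sum fun g _ => by split_ifs <;> simp [prHist_nonneg]
    _ = ∑ g : Fin 0 → A × S, if True then prHist M π.toFun s (List.ofFn g) else 0 :=
        sum_ite_prHist_eq_of_le M π s (c := fun _ => True) (by simp) n.zero_le
    _ = 1 := by simp [prHist, prFrom]

theorem satProbN_eq_sum_prSatAt (π : Strategy M) (U F : Set S) (s : S) (n : ℕ) :
    satProbN M π.toFun U F s n = ∑ k ∈ Finset.range (n + 1), prSatAt M π.toFun U F s k := by
  have hsummand : ∀ g : Fin n → A × S,
      (if isHist M s (List.ofFn g) ∧ satRA U F s (List.ofFn g)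
        then prHist M π.toFun s (List.ofFn g) else 0)
      = ∑ k ∈ Finset.range (n + 1),
          if satAt U F s (List.ofFn g) k then prHist M π.toFun s (List.ofFn g) else 0 := by
    intro g
    have h := ite_satRA_eq_sum U F s (List.ofFn g) (prHist M π.toFun s (List.ofFn g))
    rw [List.length_ofFn] at h
    rw [← h]
    by_cases hpr : prHist M π.toFun s (List.ofFn g) = 0
    · simp [hpr]
    · simp [isHist_of_prHist_ne_zero M π hpr]
  rw [satProbN, Finset.sum_congr rfl fun g _ => hsummand g, Finset.sum_comm]
  refine Finset.sum_congr rfl fun k hk => ?_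
  exact sum_ite_prHist_eq_of_le M π s (c := fun l => satAt U F s l k)
    (fun l x hk => satAt_append_iff [x] hk) (Nat.lt_succ_iff.mp (Finset.mem_range.mp hk))

theorem prSat_eq_one_of_satProbN_le {S' A' : Type} [Fintype S'] [Fintype A'] {M' : MDP S' A'}
    {π : Strategy M} {π' : Strategy M'} {U F : Set S} {U' F' : Set S'} {s : S} {s' : S'}
    (h : prSat M π.toFun U F s = 1)
    (hle : ∀ n, satProbN M π.toFun U F s n ≤ satProbN M' π'.toFun U' F' s' n) :
    prSat M' π'.toFun U' F' s' = 1 := by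
  have hbdd : BddAbove (Set.range (satProbN M' π'.toFun U' F' s')) :=
    ⟨1, by rintro _ ⟨n, rfl⟩; exact satProbN_le_one M' π' U' F' s' n⟩
  refine le_antisymm (ciSup_le (satProbN_le_one M' π' U' F' s')) ?_
  calc (1 : ℝ) = prSat M π.toFun U F s := h.symm
    _ ≤ prSat M' π'.toFun U' F' s' := ciSup_mono hbdd hle

end Probability

section Augmented

variable (M : MDP S A) (O : ObsFun M) (U0 F0 : Set S)

theorem updateV_subset_updateInv {B C : Set S} (h : B ⊆ C) (a : A) (t : S) :
    updateV M O U0 F0 B a t ⊆ updateInv M O U0 F0 C t :=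
  fun _ ⟨so, hso, ha, hpost, hobs⟩ => ⟨so, h hso, a, ha, hpost, hobs⟩

theorem augV_P_updateV {s : S} {B : Set S} {a : A} (ha : ∃ so ∈ B, a ∈ allowed M U0 F0 so)
    (t : S) : (augV M O U0 F0).P (s, B) a (t, updateV M O U0 F0 B a t) = M.P s a t := by
  have hB : B.Nonempty := ha.imp fun _ h => h.1
  simp [augV, hB, ha]

theorem augInv_P_updateInv {s : S} {C : Set S} {a : A}
    (ha : ∃ so ∈ C, a ∈ allowed M U0 F0 so) (hact : a ∈ M.act s) (t : S) :
    (augInv M O U0 F0).P (s, C) a (t, updateInv M O U0 F0 C t) = M.P s a t := by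
  simp [augInv, ha, hact]

/-- In `M~` the belief component of every successor is determined: when the action is not
allowed in the belief, `Update_v` is empty, which is also the belief of the sink `(s, ∅)`. -/
theorem updateV_eq_of_augV_P_pos {p q : S × Set S} {a : A}
    (h : 0 < (augV M O U0 F0).P p a q) : q.2 = updateV M O U0 F0 p.2 a q.1 := by
  simp only [augV] at h
  split_ifs at h with hallowed hq hq
  · exact hq
  · exact absurd h (lt_irrefl 0)
  · rw [hq, eq_comm, Set.eq_empty_iff_forall_notMem]
    rintro s' ⟨so, hso, ha, -⟩
    exact hallowed ⟨⟨so, hso⟩, so, hso, ha⟩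
  · exact absurd h (lt_irrefl 0)

theorem liftBelief_stripBelief_of_isHist {p : S × Set S} {l : List (A × (S × Set S))}
    (h : isHist (augV M O U0 F0) p l) :
    liftBelief (updateV M O U0 F0) p.2 (stripBelief l) = l := by
  induction l generalizing p with
  | nil => rfl
  | cons x l ih =>
    obtain ⟨a, q⟩ := x
    obtain ⟨-, hP, hl⟩ := h
    simp only [stripBelief, List.map_cons, liftBelief]
    rw [← updateV_eq_of_augV_P_pos M O U0 F0 hP]
    exact congrArg _ (ih hl)

noncomputable def simStrategy (π : Strategy (augV M O U0 F0)) :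
    Strategy (augInv M O U0 F0) where
  toFun p l := π.toFun p (liftBelief (updateV M O U0 F0) p.2 (stripBelief l))
  nonneg p l := π.nonneg _ _
  sum_one p l := π.sum_one _ _
  support_mem p l a h := by
    have hmem := π.support_mem _ _ a h
    obtain ⟨x, b⟩ := p
    simpa [augV, augInv, lastState_liftBelief, ← lastState_stripBelief] using hmem

theorem prHist_simStrategy_liftBelief (π : Strategy (augV M O U0 F0)) (s : S) (B : Set S)
    (w : List (A × S)) (hne : ∀ q ∈ liftBelief (updateV M O U0 F0) B w, q.2.2.Nonempty) :
    prHist (augInv M O U0 F0) (simStrategy M O U0 F0 π).toFun (s, B)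
        (liftBelief (fun C _ t => updateInv M O U0 F0 C t) B w)
      = prHist (augV M O U0 F0) π.toFun (s, B) (liftBelief (updateV M O U0 F0) B w) := by
  induction w using List.reverseRecOn with
  | nil => rfl
  | append_singleton w x ih =>
    obtain ⟨a, t⟩ := x
    simp only [liftBelief_append_singleton, List.mem_append, List.mem_singleton] at hne ⊢
    rw [prHist_append_singleton, prHist_append_singleton, ih fun q hq => hne q (.inl hq)]
    have hallowed : ∃ so ∈ runBelief (updateV M O U0 F0) B w, a ∈ allowed M U0 F0 so := by
      obtain ⟨-, so, hso, ha, -⟩ := hne _ (.inr rfl)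
      exact ⟨so, hso, ha⟩
    have hsub : runBelief (updateV M O U0 F0) B w
        ⊆ runBelief (fun C _ t => updateInv M O U0 F0 C t) B w :=
      runBelief_rel (r := fun B C : Set S => B ⊆ C)
        (fun _ _ a t h => updateV_subset_updateInv M O U0 F0 h a t) subset_rfl w
    simp only [simStrategy, stripBelief_liftBelief, lastState_liftBelief]
    rw [augV_P_updateV M O U0 F0 hallowed]
    rcases (π.nonneg (s, B) (liftBelief (updateV M O U0 F0) B w) a).eq_or_lt with hπ | hπ
    · simp [← hπ]
    have hact : a ∈ M.act (lastState s w) := by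
      simpa [augV, lastState_liftBelief] using π.support_mem _ _ a hπ
    rw [augInv_P_updateInv M O U0 F0 (hallowed.imp fun _ h => ⟨hsub h.1, h.2⟩) hact]

variable (U1 F1 : Set S)

theorem prSatAt_augV_le_prSatAt_augInv (π : Strategy (augV M O U0 F0)) (p : S × Set S)
    (k : ℕ) :
    prSatAt (augV M O U0 F0) π.toFun (augU U1) (augF F1) p k
      ≤ prSatAt (augInv M O U0 F0) (simStrategy M O U0 F0 π).toFun (augU U1) (augF F1) p k := by
  obtain ⟨s, B⟩ := p
  have hsupp : ∀ l, (if satAt (augU U1) (augF F1) (s, B) l k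
      then prHist (augV M O U0 F0) π.toFun (s, B) l else 0) ≠ 0 →
      satAt (augU U1) (augF F1) (s, B) l k ∧
        liftBelief (updateV M O U0 F0) B (stripBelief l) = l := fun l hl =>
    have ⟨hsat, hpr⟩ := ite_ne_right_iff.mp hl
    ⟨hsat, liftBelief_stripBelief_of_isHist M O U0 F0 (isHist_of_prHist_ne_zero _ π hpr)⟩
  refine sum_ofFn_le_sum_ofFn_of_injOn
    (f := fun l => if satAt (augU U1) (augF F1) (s, B) l k
      then prHist (augV M O U0 F0) π.toFun (s, B) l else 0)
    (g := fun l => if satAt (augU U1) (augF F1) (s, B) l k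
      then prHist (augInv M O U0 F0) (simStrategy M O U0 F0 π).toFun (s, B) l else 0)
    (fun l => liftBelief (fun C _ t => updateInv M O U0 F0 C t) B (stripBelief l)) (by simp)
    (fun l₁ l₂ h₁ h₂ heq => ?_) (fun l hlen hl => ?_)
    (fun l => by split_ifs <;> simp [prHist_nonneg])
  · rw [← (hsupp l₁ h₁).2, ← (hsupp l₂ h₂).2,
      ← stripBelief_liftBelief (fun C _ t => updateInv M O U0 F0 C t) B (stripBelief l₁), heq,
      stripBelief_liftBelief]
  obtain ⟨hsat, hlift⟩ := hsupp l hl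
  obtain ⟨w, rfl⟩ : ∃ w, l = liftBelief (updateV M O U0 F0) B w := ⟨_, hlift.symm⟩
  have hne : ∀ q ∈ liftBelief (updateV M O U0 F0) B w, q.2.2.Nonempty := fun q hq =>
    Set.nonempty_iff_ne_empty.mpr fun h0 =>
      (hlen ▸ hsat).snd_notMem_sdiff q hq ⟨.inr h0, fun hF => hF.2 h0⟩
  have hsatInv := satAt_augU_augF_of_forall₂
    (forall₂_liftBelief (r := fun B C : Set S => B ⊆ C)
      (fun _ _ a t h => updateV_subset_updateInv M O U0 F0 h a t) subset_rfl w) hsat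
  simp only [stripBelief_liftBelief, if_pos hsatInv, if_pos hsat]
  exact prHist_simStrategy_liftBelief M O U0 F0 π s B w hne

end Augmented

theorem visible_ASW_imp_invisible_ASW_general (M : MDP S A) (O : ObsFun M)
    (U0 F0 U1 F1 : Set S)
    (h : (M.init, O.obs M.init) ∈ ASW (augV M O U0 F0) (augU U1) (augF F1)) :
    (M.init, O.obs M.init) ∈ ASW (augInv M O U0 F0) (augU U1) (augF F1) := by
  obtain ⟨π, hπ⟩ := h
  refine ⟨simStrategy M O U0 F0 π, prSat_eq_one_of_satProbN_le _ hπ fun n => ?_⟩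
  rw [satProbN_eq_sum_prSatAt, satProbN_eq_sum_prSatAt]
  exact Finset.sum_le_sum fun k _ => prSatAt_augV_le_prSatAt_augInv M O U0 F0 U1 F1 π _ k

/-- if the attacker has a non-revealing intention-deception almost-sure
winning strategy against the action-visible defender (the initial augmented state is in
the ASW region of `M~`), then he has one against the action-invisible defender. -/
theorem visible_ASW_imp_invisible_ASW (M : MDP S A) (O : ObsFun M)
    (U0 F0 U1 F1 : Set S) (h0 : Disjoint U0 F0) (h1 : Disjoint U1 F1)
    (h : (M.init, O.obs M.init) ∈ ASW (augV M O U0 F0) (augU U1) (augF F1)) :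
    (M.init, O.obs M.init) ∈ ASW (augInv M O U0 F0) (augU U1) (augF F1) :=
  visible_ASW_imp_invisible_ASW_general M O U0 F0 U1 F1 h
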